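/- arXiv:2503.20976 — 9 statements merged into one kernel-verified Lean document; each statement's English description precedes it below -/
import Mathlib

section
/- Let a, b, λ, P, P^min, P^max, ν⁺, ν⁻ be real numbers with a > 0, P^min < P^max, P^min ≤ P ≤ P^max, ν⁺ ≥ 0, ν⁻ ≥ 0, satisfying the stationarity condition 2·a·P + b − λ + ν⁺ − ν⁻ = 0 and the complementary slackness conditions ν⁺·(P − P^max) = 0 and ν⁻·(P^min − P) = 0. If P < (λ − b)/(2a), then ν⁺ > 0, ν⁻ = 0, and P = P^max; that is, the observed generation reveals the maximum capacity of the generator. -/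
/-- Scenario 1, Case 1: if `P < (λ − b)/(2a)` then the upper capacity constraint is
    binding, i.e. `ν⁺ > 0`, `ν⁻ = 0`, and `P = P^max`. -/
theorem capacity_upper_bound_revealed
    (a b lam P Pmin Pmax νp νm : ℝ)
    (ha : 0 < a)
    (hminmax : Pmin < Pmax)
    (hPlow : Pmin ≤ P) (hPhigh : P ≤ Pmax)
    (hνp : 0 ≤ νp) (hνm : 0 ≤ νm)
    (hstat : 2 * a * P + b - lam + νp - νm = 0)
    (hcsp : νp * (P - Pmax) = 0)
    (hcsm : νm * (Pmin - P) = 0)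
    (hcase : P < (lam - b) / (2 * a)) :
    0 < νp ∧ νm = 0 ∧ P = Pmax := by
  have h2a : 0 < 2 * a := by linarith
  have h1 : 2 * a * P < lam - b := by
    have := (lt_div_iff₀' h2a).mp hcase
    linarith
  have hνppos : 0 < νp := by linarith
  have hPmax : P = Pmax := by
    rcases mul_eq_zero.mp hcsp with h | h
    · exact absurd h (ne_of_gt hνppos)
    · linarith
  have hνm0 : νm = 0 := by
    rcases mul_eq_zero.mp hcsm with h | h
    · exact h
    · linarith
  exact ⟨hνppos, hνm0, hPmax⟩
end

section
/- Let a, b, λ, P, P^min, P^max, ν⁺, ν⁻ be real numbers with a > 0, P^min < P^max, P^min ≤ P ≤ P^max, ν⁺ ≥ 0, ν⁻ ≥ 0, satisfying the stationarity condition 2·a·P + b − λ + ν⁺ − ν⁻ = 0 and the complementary slackness conditions ν⁺·(P − P^max) = 0 and ν⁻·(P^min − P) = 0. If P > (λ − b)/(2a), then ν⁻ > 0, ν⁺ = 0, and P = P^min; that is, the observed generation reveals the minimum capacity of the generator. -/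
/-- Scenario 1, Case 2: if `P > (λ − b)/(2a)` then the lower capacity constraint is
    binding, i.e. `ν⁻ > 0`, `ν⁺ = 0`, and `P = P^min`. -/
theorem capacity_lower_bound_revealed
    (a b lam P Pmin Pmax νp νm : ℝ)
    (ha : 0 < a)
    (hminmax : Pmin < Pmax)
    (hPlow : Pmin ≤ P) (hPhigh : P ≤ Pmax)
    (hνp : 0 ≤ νp) (hνm : 0 ≤ νm)
    (hstat : 2 * a * P + b - lam + νp - νm = 0)
    (hcsp : νp * (P - Pmax) = 0)
    (hcsm : νm * (Pmin - P) = 0)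
    (hcase : P > (lam - b) / (2 * a)) :
    0 < νm ∧ νp = 0 ∧ P = Pmin := by
  have h2a : 0 < 2 * a := by linarith
  have hP : (lam - b) < 2 * a * P := by
    have := (div_lt_iff₀ h2a).mp hcase
    linarith
  have hνm' : 0 < νm := by linarith
  have hPeq : P = Pmin := by
    rcases mul_eq_zero.mp hcsm with h | h
    · linarith
    · linarith
  have hνp0 : νp = 0 := by
    rcases mul_eq_zero.mp hcsp with h | h
    · exact h
    · linarith
  exact ⟨hνm', hνp0, hPeq⟩
end

section
/- Let a ∈ ℝ^n with a_g > 0 for every g and b ∈ ℝ^n, and suppose that for every i ∈ {1,…,n} the two stationarity equations 2·a_i·(Pβ_i − Σ_{g≠i} (λβ_{i,g} − b_g)/(2 a_g)) + b_i − λβ_{i,i} = 0 and 2·a_i·(Pα_i − Σ_{g≠i} (λα_{i,g} − b_g)/(2 a_g)) + b_i − λα_{i,i} = 0 hold, and that D_i(a) ≠ 0 for every i. Then a is a fixed point of the MFPI map, i.e., a_i = F_i(a) = (λβ_{i,i} − λα_{i,i}) / (2 D_i(a)) for every i. -/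
/-- Denominator `D_i(a)` of the MFPI map. -/
noncomputable def Dden (n : ℕ) (Pβ Pα : Fin n → ℝ) (lβ lα : Fin n → Fin n → ℝ)
    (a : Fin n → ℝ) (i : Fin n) : ℝ :=
  Pβ i - Pα i + ∑ g ∈ Finset.univ.erase i, (lα i g - lβ i g) / (2 * a g)

/-- MFPI map `F_i(a)`. -/
noncomputable def Fmfpi (n : ℕ) (Pβ Pα : Fin n → ℝ) (lβ lα : Fin n → Fin n → ℝ)
    (a : Fin n → ℝ) (i : Fin n) : ℝ :=
  (lβ i i - lα i i) / (2 * Dden n Pβ Pα lβ lα a i)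

/-- Scenario 2: the true quadratic coefficient vector is a fixed point of the MFPI map. -/
theorem true_coefficients_are_fixed_point
    (n : ℕ) (hn : 1 ≤ n)
    (Pβ Pα : Fin n → ℝ) (lβ lα : Fin n → Fin n → ℝ)
    (a b : Fin n → ℝ) (ha : ∀ g, 0 < a g)
    (hβ : ∀ i, 2 * a i * (Pβ i - ∑ g ∈ Finset.univ.erase i, (lβ i g - b g) / (2 * a g))
            + b i - lβ i i = 0)
    (hα : ∀ i, 2 * a i * (Pα i - ∑ g ∈ Finset.univ.erase i, (lα i g - b g) / (2 * a g))
            + b i - lα i i = 0)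
    (hD : ∀ i, Dden n Pβ Pα lβ lα a i ≠ 0) :
    ∀ i, a i = Fmfpi n Pβ Pα lβ lα a i := by
  intro i
  have hs : (∑ g ∈ Finset.univ.erase i, (lβ i g - b g) / (2 * a g))
      - (∑ g ∈ Finset.univ.erase i, (lα i g - b g) / (2 * a g))
      = -∑ g ∈ Finset.univ.erase i, (lα i g - lβ i g) / (2 * a g) := by
    rw [← Finset.sum_sub_distrib, ← Finset.sum_neg_distrib]
    exact Finset.sum_congr rfl fun g _ => by ring
  have key : 2 * a i * Dden n Pβ Pα lβ lα a i = lβ i i - lα i i := by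
    have h1 := hβ i
    have h2 := hα i
    unfold Dden
    linear_combination h1 - h2 + 2 * a i * hs
  have hDi := hD i
  unfold Fmfpi
  field_simp
  linarith [key]
end

section
/- Assume conditions (C1) and (C2) and the a_min bound (Eq. 13) with 0 < a_min ≤ a_max. Then for every a in the box B and every i ∈ {1,…,n}, the denominator is strictly positive: D_i(a) > 0; consequently the MFPI map is well defined on B and F_i(a) = (λβ_{i,i} − λα_{i,i}) / (2 D_i(a)) > 0. -/
/-- Under conditions (C1), (C2) and the `a_min` bound (Eq. 13), the denominator
    `D_i(a)` is strictly positive on the box `B`, so the MFPI map is well defined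
    and strictly positive there. -/
theorem denominator_positive_on_box
    (n : ℕ) (hn : 1 ≤ n)
    (Pβ Pα : Fin n → ℝ) (lβ lα : Fin n → Fin n → ℝ)
    (amin amax : ℝ) (hamin : 0 < amin) (haminmax : amin ≤ amax)
    (hC1 : ∀ i, 0 < lβ i i - lα i i)
    (hC2 : ∀ i, 0 < Pβ i - Pα i)
    (hEq13 : ∀ i : Fin n,
      (Real.sqrt ((lβ i i - lα i i) *
          ∑ g ∈ Finset.univ.erase i, |lα i g - lβ i g|)
        - ∑ g ∈ (Finset.univ.erase i).filter (fun g => lα i g - lβ i g < 0),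
            (lα i g - lβ i g))
      / (2 * (Pβ i - Pα i)
        + ∑ g ∈ (Finset.univ.erase i).filter (fun g => 0 ≤ lα i g - lβ i g),
            (lα i g - lβ i g) / amax)
      < amin) :
    ∀ a : Fin n → ℝ, (∀ g, amin ≤ a g ∧ a g ≤ amax) →
      ∀ i, 0 < Dden n Pβ Pα lβ lα a i ∧ 0 < Fmfpi n Pβ Pα lβ lα a i := by
  intro a ha i
  have hamax : 0 < amax := lt_of_lt_of_le hamin haminmax
  have hag : ∀ g, 0 < a g := fun g => lt_of_lt_of_le hamin (ha g).1
  set S := Finset.univ.erase i with hS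
  set Sp := S.filter (fun g => 0 ≤ lα i g - lβ i g) with hSp
  set Sm := S.filter (fun g => lα i g - lβ i g < 0) with hSm
  -- term-wise lower bounds
  have hboundp : ∀ g ∈ Sp, (lα i g - lβ i g) / (2 * amax) ≤ (lα i g - lβ i g) / (2 * a g) := by
    intro g hg
    have hcg : 0 ≤ lα i g - lβ i g := (Finset.mem_filter.mp hg).2
    exact div_le_div_of_nonneg_left hcg (by have := hag g; linarith) (by nlinarith [(ha g).2])
  have hboundm : ∀ g ∈ Sm, (lα i g - lβ i g) / (2 * amin) ≤ (lα i g - lβ i g) / (2 * a g) := by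
    intro g hg
    have hcg : lα i g - lβ i g < 0 := (Finset.mem_filter.mp hg).2
    have h1 : (-(lα i g - lβ i g)) / (2 * a g) ≤ (-(lα i g - lβ i g)) / (2 * amin) :=
      div_le_div_of_nonneg_left (by linarith) (by positivity) (by nlinarith [(ha g).1])
    rw [neg_div, neg_div] at h1
    linarith
  -- split the sum
  have hsplit : ∑ g ∈ Sp, (lα i g - lβ i g) / (2 * a g)
      + ∑ g ∈ Sm, (lα i g - lβ i g) / (2 * a g)
      = ∑ g ∈ S, (lα i g - lβ i g) / (2 * a g) := by
    rw [hSp, hSm]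
    have := Finset.sum_filter_add_sum_filter_not S (fun g => 0 ≤ lα i g - lβ i g)
      (fun g => (lα i g - lβ i g) / (2 * a g))
    simpa only [not_le] using this
  have hsum : ∑ g ∈ Sp, (lα i g - lβ i g) / (2 * amax)
      + ∑ g ∈ Sm, (lα i g - lβ i g) / (2 * amin)
      ≤ ∑ g ∈ S, (lα i g - lβ i g) / (2 * a g) := by
    rw [← hsplit]
    exact add_le_add (Finset.sum_le_sum hboundp) (Finset.sum_le_sum hboundm)
  -- positivity of the Eq.13 denominator
  have hE : 0 < 2 * (Pβ i - Pα i) + ∑ g ∈ Sp, (lα i g - lβ i g) / amax := by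
    have h1 : 0 ≤ ∑ g ∈ Sp, (lα i g - lβ i g) / amax := by
      apply Finset.sum_nonneg
      intro g hg
      exact div_nonneg (Finset.mem_filter.mp hg).2 hamax.le
    have := hC2 i
    linarith
  -- from Eq 13 and sqrt ≥ 0
  have hsqrt : 0 ≤ Real.sqrt ((lβ i i - lα i i) * ∑ g ∈ S, |lα i g - lβ i g|) :=
    Real.sqrt_nonneg _
  have h13 := hEq13 i
  rw [div_lt_iff₀ hE] at h13
  have hkey : 0 < amin * (2 * (Pβ i - Pα i) + ∑ g ∈ Sp, (lα i g - lβ i g) / amax)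
      + ∑ g ∈ Sm, (lα i g - lβ i g) := by
    nlinarith [hsqrt]
  -- now combine
  have hDge : (amin * (2 * (Pβ i - Pα i) + ∑ g ∈ Sp, (lα i g - lβ i g) / amax)
      + ∑ g ∈ Sm, (lα i g - lβ i g)) / (2 * amin) ≤ Dden n Pβ Pα lβ lα a i := by
    have heq : (amin * (2 * (Pβ i - Pα i) + ∑ g ∈ Sp, (lα i g - lβ i g) / amax)
        + ∑ g ∈ Sm, (lα i g - lβ i g)) / (2 * amin)
        = Pβ i - Pα i + (∑ g ∈ Sp, (lα i g - lβ i g) / (2 * amax)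
          + ∑ g ∈ Sm, (lα i g - lβ i g) / (2 * amin)) := by
      have e1 : ∑ g ∈ Sp, (lα i g - lβ i g) / (2 * amax)
          = (∑ g ∈ Sp, (lα i g - lβ i g) / amax) / 2 := by
        rw [Finset.sum_div]
        exact Finset.sum_congr rfl (fun g _ => by ring)
      have e2 : ∑ g ∈ Sm, (lα i g - lβ i g) / (2 * amin)
          = (∑ g ∈ Sm, (lα i g - lβ i g)) / (2 * amin) := by
        rw [Finset.sum_div]
      rw [e1, e2]
      field_simp
      ring
    rw [heq]
    unfold Dden
    have := hsum
    rw [← hS] at *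
    linarith
  have hD : 0 < Dden n Pβ Pα lβ lα a i := lt_of_lt_of_le (by positivity) hDge
  exact ⟨hD, div_pos (hC1 i) (by linarith)⟩
end

section
/- Let a ∈ ℝ^n have all entries nonzero and suppose D_i(a) ≠ 0 for a fixed i ∈ {1,…,n}. Then for every g ≠ i, the one-variable function t ↦ F_i(a with its g-th entry replaced by t) is differentiable at t = a_g with derivative ∂F_i/∂a_g = (λβ_{i,i} − λα_{i,i})·(λα_{i,g} − λβ_{i,g}) / (4·a_g²·D_i(a)²); moreover F_i does not depend on the i-th coordinate, so ∂F_i/∂a_i = 0. -/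
/-! The sum defining `D_i(a)` skips the index `i`, so `F_i` ignores `a_i`; in the coordinate `a_g`
(`g ≠ i`) the denominator is an affine function of `1 / a_g`, and the quotient rule gives the entry. -/

section MFPI

variable {n : ℕ} (Pβ Pα : Fin n → ℝ) (lβ lα : Fin n → Fin n → ℝ) (a : Fin n → ℝ) (i : Fin n)

lemma Dden_update_self (t : ℝ) :
    Dden n Pβ Pα lβ lα (Function.update a i t) i = Dden n Pβ Pα lβ lα a i := by
  unfold Dden
  congr 1
  refine Finset.sum_congr rfl fun x hx => ?_
  rw [Function.update_of_ne (Finset.ne_of_mem_erase hx)]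

lemma Fmfpi_update_self (t : ℝ) :
    Fmfpi n Pβ Pα lβ lα (Function.update a i t) i = Fmfpi n Pβ Pα lβ lα a i := by
  rw [Fmfpi, Fmfpi, Dden_update_self]

lemma Dden_update_of_ne {g : Fin n} (hg : g ≠ i) (t : ℝ) :
    Dden n Pβ Pα lβ lα (Function.update a g t) i
      = Dden n Pβ Pα lβ lα a i - (lα i g - lβ i g) / (2 * a g)
        + (lα i g - lβ i g) / (2 * t) := by
  have hg_mem : g ∈ Finset.univ.erase i := Finset.mem_erase.2 ⟨hg, Finset.mem_univ g⟩
  have h_rest : ∑ x ∈ (Finset.univ.erase i).erase g,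
      (lα i x - lβ i x) / (2 * Function.update a g t x)
      = ∑ x ∈ (Finset.univ.erase i).erase g, (lα i x - lβ i x) / (2 * a x) :=
    Finset.sum_congr rfl fun x hx => by rw [Function.update_of_ne (Finset.ne_of_mem_erase hx)]
  unfold Dden
  rw [← Finset.add_sum_erase _ _ hg_mem, ← Finset.add_sum_erase _ _ hg_mem, h_rest,
    Function.update_self]
  ring

lemma hasDerivAt_div_two_mul (k : ℝ) {x : ℝ} (hx : x ≠ 0) :
    HasDerivAt (fun t => k / (2 * t)) (-(k / (2 * x ^ 2))) x := by
  refine ((hasDerivAt_const x k).fun_div ((hasDerivAt_id' x).const_mul 2)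
    (mul_ne_zero two_ne_zero hx)).congr_deriv ?_
  field_simp
  ring

lemma hasDerivAt_Dden_update_of_ne {g : Fin n} (hg : g ≠ i) (hag : a g ≠ 0) :
    HasDerivAt (fun t => Dden n Pβ Pα lβ lα (Function.update a g t) i)
      (-((lα i g - lβ i g) / (2 * a g ^ 2))) (a g) := by
  simp only [Dden_update_of_ne Pβ Pα lβ lα a i hg]
  simpa using (hasDerivAt_div_two_mul (lα i g - lβ i g) hag).const_add
    (Dden n Pβ Pα lβ lα a i - (lα i g - lβ i g) / (2 * a g))

lemma hasDerivAt_Fmfpi_update_of_ne {g : Fin n} (hg : g ≠ i) (hag : a g ≠ 0)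
    (hD : Dden n Pβ Pα lβ lα a i ≠ 0) :
    HasDerivAt (fun t => Fmfpi n Pβ Pα lβ lα (Function.update a g t) i)
      ((lβ i i - lα i i) * (lα i g - lβ i g)
        / (4 * (a g) ^ 2 * (Dden n Pβ Pα lβ lα a i) ^ 2)) (a g) := by
  have h_two_D := ((hasDerivAt_Dden_update_of_ne Pβ Pα lβ lα a i hg hag).const_mul 2)
  refine ((hasDerivAt_const (a g) (lβ i i - lα i i)).fun_div h_two_D
    (by simpa using mul_ne_zero two_ne_zero hD)).congr_deriv ?_
  simp only [Function.update_eq_self]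
  field_simp
  ring

end MFPI

theorem mfpi_jacobian_entries_general
    (n : ℕ) (i : Fin n)
    (Pβ Pα : Fin n → ℝ) (lβ lα : Fin n → Fin n → ℝ)
    (a : Fin n → ℝ) (ha : ∀ g, a g ≠ 0)
    (hD : Dden n Pβ Pα lβ lα a i ≠ 0) :
    (∀ g, g ≠ i →
      HasDerivAt (fun t => Fmfpi n Pβ Pα lβ lα (Function.update a g t) i)
        ((lβ i i - lα i i) * (lα i g - lβ i g)
          / (4 * (a g) ^ 2 * (Dden n Pβ Pα lβ lα a i) ^ 2))
        (a g)) ∧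
    (∀ t : ℝ, Fmfpi n Pβ Pα lβ lα (Function.update a i t) i
        = Fmfpi n Pβ Pα lβ lα a i) ∧
    HasDerivAt (fun t => Fmfpi n Pβ Pα lβ lα (Function.update a i t) i) 0 (a i) := by
  refine ⟨fun g hg => hasDerivAt_Fmfpi_update_of_ne Pβ Pα lβ lα a i hg (ha g) hD,
    Fmfpi_update_self Pβ Pα lβ lα a i, ?_⟩
  simp only [Fmfpi_update_self]
  exact hasDerivAt_const _ _

/-- Partial derivatives of the MFPI map: for `g ≠ i`,
    `∂F_i/∂a_g = (λβ_{ii} − λα_{ii})(λα_{ig} − λβ_{ig}) / (4 a_g² D_i(a)²)`,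
    and `F_i` does not depend on the `i`-th coordinate, so `∂F_i/∂a_i = 0`. -/
theorem mfpi_jacobian_entries
    (n : ℕ) (hn : 1 ≤ n) (i : Fin n)
    (Pβ Pα : Fin n → ℝ) (lβ lα : Fin n → Fin n → ℝ)
    (a : Fin n → ℝ) (ha : ∀ g, a g ≠ 0)
    (hD : Dden n Pβ Pα lβ lα a i ≠ 0) :
    (∀ g, g ≠ i →
      HasDerivAt (fun t => Fmfpi n Pβ Pα lβ lα (Function.update a g t) i)
        ((lβ i i - lα i i) * (lα i g - lβ i g)
          / (4 * (a g) ^ 2 * (Dden n Pβ Pα lβ lα a i) ^ 2))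
        (a g)) ∧
    (∀ t : ℝ, Fmfpi n Pβ Pα lβ lα (Function.update a i t) i
        = Fmfpi n Pβ Pα lβ lα a i) ∧
    HasDerivAt (fun t => Fmfpi n Pβ Pα lβ lα (Function.update a i t) i) 0 (a i) :=
  mfpi_jacobian_entries_general n i Pβ Pα lβ lα a ha hD
end

section
/- Assume conditions (C1) and (C2) and the a_min bound (Eq. 13) with 0 < a_min ≤ a_max. Then for every a in the box B and every i ∈ {1,…,n}, the i-th absolute row sum of the Jacobian of the MFPI map satisfies Σ_{g≠i} (λβ_{i,i} − λα_{i,i})·|λα_{i,g} − λβ_{i,g}| / (4·a_g²·D_i(a)²) < 1; in particular the L∞ operator norm of the Jacobian of F is strictly less than 1 everywhere on B. -/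
/-!
Write `c = λβ_{i,i} - λα_{i,i}`, `d_g = λα_{i,g} - λβ_{i,g}` and `T = ∑_{g ≠ i} |d_g|`.
On the box, each term `d_g / (2 a_g)` of `D_i(a)` is at least `d_g / (2 a_max)` when `d_g ≥ 0`
and at least `d_g / (2 a_min)` when `d_g < 0`; after clearing its denominator, Eq. 13 then says
exactly that `√(c T) < 2 a_min D_i(a)`. Squaring, `c T < 4 a_min² D_i(a)²`, and the row sum is
at most `c T / (4 a_min² D_i(a)²)` because every `a_g ≥ a_min`.
-/

open Finset

variable {ι : Type*} {s : Finset ι} {d a : ι → ℝ} {amin amax : ℝ}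

lemma sum_filter_le_sum_div_of_mem_Icc (hamin : 0 < amin)
    (ha : ∀ g ∈ s, amin ≤ a g ∧ a g ≤ amax) :
    amin * ∑ g ∈ s.filter (fun g => 0 ≤ d g), d g / amax
        + ∑ g ∈ s.filter (fun g => d g < 0), d g
      ≤ 2 * amin * ∑ g ∈ s, d g / (2 * a g) := by
  rw [← sum_filter_add_sum_filter_not s (fun g => 0 ≤ d g), mul_add, mul_sum, mul_sum, mul_sum]
  simp only [not_le]
  refine add_le_add (sum_le_sum fun g hg => ?_) (sum_le_sum fun g hg => ?_)
  all_goals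
    obtain ⟨hg, hd⟩ := mem_filter.1 hg
    have hag := ha g hg
    have hpos : 0 < a g := hamin.trans_le hag.1
  · rw [show 2 * amin * (d g / (2 * a g)) = amin * (d g / a g) by field_simp]
    exact mul_le_mul_of_nonneg_left (div_le_div_of_nonneg_left hd hpos hag.2) hamin.le
  · rw [show 2 * amin * (d g / (2 * a g)) = d g * (amin / a g) by field_simp]
    simpa using mul_le_mul_of_nonpos_left ((div_le_one hpos).2 hag.1) hd.le

lemma sum_mul_div_four_mul_sq_mul_sq_lt_one {w : ι → ℝ} {c D : ℝ} (hc : 0 ≤ c)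
    (hw : ∀ g ∈ s, 0 ≤ w g) (hamin : 0 < amin) (ha : ∀ g ∈ s, amin ≤ a g)
    (hsqrt : √(c * ∑ g ∈ s, w g) < 2 * amin * D) :
    ∑ g ∈ s, c * w g / (4 * a g ^ 2 * D ^ 2) < 1 := by
  have hD : 0 < D := pos_of_mul_pos_right ((Real.sqrt_nonneg _).trans_lt hsqrt) (by positivity)
  have hcw : c * ∑ g ∈ s, w g < 4 * amin ^ 2 * D ^ 2 := by
    rw [Real.sqrt_lt' (by positivity)] at hsqrt
    linarith
  calc ∑ g ∈ s, c * w g / (4 * a g ^ 2 * D ^ 2)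
      ≤ ∑ g ∈ s, c * w g / (4 * amin ^ 2 * D ^ 2) := by
        gcongr with g hg
        · exact mul_nonneg hc (hw g hg)
        · exact ha g hg
    _ = c * (∑ g ∈ s, w g) / (4 * amin ^ 2 * D ^ 2) := by rw [mul_sum, sum_div]
    _ < 1 := (div_lt_one (by positivity)).2 hcw

theorem jacobian_row_sums_lt_one_general
    (n : ℕ)
    (Pβ Pα : Fin n → ℝ) (lβ lα : Fin n → Fin n → ℝ)
    (amin amax : ℝ) (hamin : 0 < amin)
    (hC1 : ∀ i, 0 < lβ i i - lα i i)
    (hC2 : ∀ i, 0 < Pβ i - Pα i)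
    (hEq13 : ∀ i : Fin n,
      (Real.sqrt ((lβ i i - lα i i) *
          ∑ g ∈ Finset.univ.erase i, |lα i g - lβ i g|)
        - ∑ g ∈ (Finset.univ.erase i).filter (fun g => lα i g - lβ i g < 0),
            (lα i g - lβ i g))
      / (2 * (Pβ i - Pα i)
        + ∑ g ∈ (Finset.univ.erase i).filter (fun g => 0 ≤ lα i g - lβ i g),
            (lα i g - lβ i g) / amax)
      < amin) :
    ∀ a : Fin n → ℝ, (∀ g, amin ≤ a g ∧ a g ≤ amax) →
      ∀ i : Fin n,
        (∑ g ∈ Finset.univ.erase i,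
            (lβ i i - lα i i) * |lα i g - lβ i g|
              / (4 * (a g) ^ 2 * (Dden n Pβ Pα lβ lα a i) ^ 2)) < 1 := by
  intro a ha i
  have hamax : 0 < amax := hamin.trans_le ((ha i).1.trans (ha i).2)
  have hden : 0 < 2 * (Pβ i - Pα i)
      + ∑ g ∈ (univ.erase i).filter (fun g => 0 ≤ lα i g - lβ i g), (lα i g - lβ i g) / amax :=
    add_pos_of_pos_of_nonneg (by linarith [hC2 i])
      (sum_nonneg fun g hg => div_nonneg (mem_filter.1 hg).2 hamax.le)
  have h13 := (div_lt_iff₀ hden).1 (hEq13 i)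
  have hbox := sum_filter_le_sum_div_of_mem_Icc (s := univ.erase i)
    (d := fun g => lα i g - lβ i g) hamin fun g _ => ha g
  refine sum_mul_div_four_mul_sq_mul_sq_lt_one (hC1 i).le (fun g _ => abs_nonneg _) hamin
    (fun g _ => (ha g).1) ?_
  rw [Dden]
  linarith

/-- Under conditions (C1), (C2) and the `a_min` bound (Eq. 13), each absolute row sum
    of the Jacobian of the MFPI map is strictly less than 1 everywhere on the box `B`;
    in particular `L∞(F'(a)) < 1` on `B`. -/
theorem jacobian_row_sums_lt_one
    (n : ℕ) (hn : 1 ≤ n)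
    (Pβ Pα : Fin n → ℝ) (lβ lα : Fin n → Fin n → ℝ)
    (amin amax : ℝ) (hamin : 0 < amin) (haminmax : amin ≤ amax)
    (hC1 : ∀ i, 0 < lβ i i - lα i i)
    (hC2 : ∀ i, 0 < Pβ i - Pα i)
    (hEq13 : ∀ i : Fin n,
      (Real.sqrt ((lβ i i - lα i i) *
          ∑ g ∈ Finset.univ.erase i, |lα i g - lβ i g|)
        - ∑ g ∈ (Finset.univ.erase i).filter (fun g => lα i g - lβ i g < 0),
            (lα i g - lβ i g))
      / (2 * (Pβ i - Pα i)
        + ∑ g ∈ (Finset.univ.erase i).filter (fun g => 0 ≤ lα i g - lβ i g),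
            (lα i g - lβ i g) / amax)
      < amin) :
    ∀ a : Fin n → ℝ, (∀ g, amin ≤ a g ∧ a g ≤ amax) →
      ∀ i : Fin n,
        (∑ g ∈ Finset.univ.erase i,
            (lβ i i - lα i i) * |lα i g - lβ i g|
              / (4 * (a g) ^ 2 * (Dden n Pβ Pα lβ lα a i) ^ 2)) < 1 :=
  jacobian_row_sums_lt_one_general n Pβ Pα lβ lα amin amax hamin hC1 hC2 hEq13
end

section
/- Assume conditions (C1) and (C2) and the a_min bound (Eq. 13) with 0 < a_min ≤ a_max. Then the MFPI map F = (F_1,…,F_n) is a contraction on the box B with respect to the supremum metric: there exists a constant L with 0 ≤ L < 1 such that max_i |F_i(a) − F_i(â)| ≤ L · max_i |a_i − â_i| for all a, â ∈ B. -/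
open Finset

lemma abs_div_two_mul_sub_div_two_mul_le {c m D D' : ℝ} (hm : 0 < m) (hD : m ≤ D)
    (hD' : m ≤ D') : |c / (2 * D) - c / (2 * D')| ≤ |c| / (2 * m ^ 2) * |D - D'| := by
  have hD0 : 0 < D := hm.trans_le hD
  have hD0' : 0 < D' := hm.trans_le hD'
  have hdiff : c / (2 * D) - c / (2 * D') = c * (D' - D) / (2 * (D * D')) := by
    field_simp
  rw [hdiff, abs_div, abs_mul, abs_sub_comm, abs_of_pos (by positivity : (0 : ℝ) < 2 * (D * D')),
    div_mul_eq_mul_div]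
  gcongr
  rw [sq]
  exact mul_le_mul hD hD' hm.le hD0.le

namespace Mfpi

variable {ι : Type*} (s : Finset ι) (d : ι → ℝ) (P : ℝ)

noncomputable def den (a : ι → ℝ) : ℝ :=
  P + ∑ g ∈ s, d g / (2 * a g)

noncomputable def minCorner (amin amax : ℝ) (g : ι) : ℝ :=
  if 0 ≤ d g then amax else amin

noncomputable def lipConst (c amin amax : ℝ) : ℝ :=
  c * (∑ g ∈ s, |d g|) / (2 * amin * den s d P (minCorner d amin amax)) ^ 2

variable {s d P}

lemma den_minCorner_le {amin amax : ℝ} (hamin : 0 < amin) {a : ι → ℝ}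
    (ha : ∀ g ∈ s, amin ≤ a g ∧ a g ≤ amax) :
    den s d P (minCorner d amin amax) ≤ den s d P a := by
  refine add_le_add_right (sum_le_sum fun g hg => ?_) P
  obtain ⟨hlo, hhi⟩ := ha g hg
  unfold minCorner
  split_ifs with hd
  · exact div_le_div_of_nonneg_left hd (by linarith) (by linarith)
  · rw [div_le_div_iff₀ (by positivity) (by linarith)]
    nlinarith

lemma abs_den_sub_den_le {amin Δ : ℝ} (hamin : 0 < amin) {a a' : ι → ℝ}
    (ha : ∀ g ∈ s, amin ≤ a g) (ha' : ∀ g ∈ s, amin ≤ a' g)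
    (hΔ : ∀ g ∈ s, |a g - a' g| ≤ Δ) :
    |den s d P a - den s d P a'| ≤ (∑ g ∈ s, |d g|) / (2 * amin ^ 2) * Δ :=
  calc |den s d P a - den s d P a'|
      = |∑ g ∈ s, (d g / (2 * a g) - d g / (2 * a' g))| := by
        rw [den, den, add_sub_add_left_eq_sub, sum_sub_distrib]
    _ ≤ ∑ g ∈ s, |d g / (2 * a g) - d g / (2 * a' g)| := abs_sum_le_sum_abs _ _
    _ ≤ ∑ g ∈ s, |d g| / (2 * amin ^ 2) * Δ := sum_le_sum fun g hg =>
        (abs_div_two_mul_sub_div_two_mul_le hamin (ha g hg) (ha' g hg)).trans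
          (by gcongr; exact hΔ g hg)
    _ = (∑ g ∈ s, |d g|) / (2 * amin ^ 2) * Δ := by rw [← sum_mul, ← sum_div]

lemma abs_div_den_sub_div_den_le {c amin amax Δ : ℝ} (hc : 0 ≤ c) (hamin : 0 < amin)
    (hmin : 0 < den s d P (minCorner d amin amax)) {a a' : ι → ℝ}
    (ha : ∀ g ∈ s, amin ≤ a g ∧ a g ≤ amax) (ha' : ∀ g ∈ s, amin ≤ a' g ∧ a' g ≤ amax)
    (hΔ : ∀ g ∈ s, |a g - a' g| ≤ Δ) :
    |c / (2 * den s d P a) - c / (2 * den s d P a')| ≤ lipConst s d P c amin amax * Δ := by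
  set m := den s d P (minCorner d amin amax)
  calc |c / (2 * den s d P a) - c / (2 * den s d P a')|
      ≤ |c| / (2 * m ^ 2) * |den s d P a - den s d P a'| :=
        abs_div_two_mul_sub_div_two_mul_le hmin (den_minCorner_le hamin ha)
          (den_minCorner_le hamin ha')
    _ ≤ c / (2 * m ^ 2) * ((∑ g ∈ s, |d g|) / (2 * amin ^ 2) * Δ) := by
        rw [abs_of_nonneg hc]
        gcongr
        exact abs_den_sub_den_le hamin (fun g hg => (ha g hg).1) (fun g hg => (ha' g hg).1) hΔ
    _ = lipConst s d P c amin amax * Δ := by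
        change _ = c * (∑ g ∈ s, |d g|) / (2 * amin * m) ^ 2 * Δ
        field_simp

lemma sqrt_lt_two_mul_den_minCorner {c amin amax : ℝ} (hamin : 0 < amin)
    (haminmax : amin ≤ amax) (hP : 0 < P)
    (h13 : (√(c * ∑ g ∈ s, |d g|) - ∑ g ∈ s.filter (fun g => d g < 0), d g)
        / (2 * P + ∑ g ∈ s.filter (fun g => 0 ≤ d g), d g / amax) < amin) :
    √(c * ∑ g ∈ s, |d g|) < 2 * amin * den s d P (minCorner d amin amax) := by
  have hamax : 0 < amax := hamin.trans_le haminmax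
  have hpos : 0 ≤ ∑ g ∈ s.filter (fun g => 0 ≤ d g), d g / amax :=
    sum_nonneg fun g hg => div_nonneg (mem_filter.mp hg).2 hamax.le
  rw [div_lt_iff₀ (by linarith)] at h13
  have hsplit : 2 * amin * den s d P (minCorner d amin amax) =
      amin * (2 * P + ∑ g ∈ s.filter (fun g => 0 ≤ d g), d g / amax)
        + ∑ g ∈ s.filter (fun g => d g < 0), d g := by
    rw [den, ← sum_filter_add_sum_filter_not s (fun g => 0 ≤ d g)]
    simp only [not_le, mul_add, mul_sum]
    rw [← add_assoc]
    congr 1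
    · congr 1
      · ring
      · refine sum_congr rfl fun g hg => ?_
        rw [minCorner, if_pos (mem_filter.mp hg).2]
        field_simp
    · refine sum_congr rfl fun g hg => ?_
      rw [minCorner, if_neg (mem_filter.mp hg).2.not_ge]
      field_simp
  linarith

lemma lipConst_nonneg {c : ℝ} (hc : 0 ≤ c) (amin amax : ℝ) :
    0 ≤ lipConst s d P c amin amax :=
  div_nonneg (mul_nonneg hc (sum_nonneg fun g _ => abs_nonneg (d g))) (sq_nonneg _)

lemma lipConst_lt_one {c amin amax : ℝ}
    (h : √(c * ∑ g ∈ s, |d g|) < 2 * amin * den s d P (minCorner d amin amax)) :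
    lipConst s d P c amin amax < 1 := by
  have hpos : 0 < 2 * amin * den s d P (minCorner d amin amax) :=
    (Real.sqrt_nonneg _).trans_lt h
  rw [lipConst, div_lt_one (by positivity)]
  exact Real.lt_sq_of_sqrt_lt h

end Mfpi

/-- Under conditions (C1), (C2) and the `a_min` bound (Eq. 13), the MFPI map is a
    contraction on the box `B` with respect to the supremum metric. -/
theorem mfpi_contraction_on_box
    (n : ℕ) (hn : 1 ≤ n)
    (Pβ Pα : Fin n → ℝ) (lβ lα : Fin n → Fin n → ℝ)
    (amin amax : ℝ) (hamin : 0 < amin) (haminmax : amin ≤ amax)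
    (hC1 : ∀ i, 0 < lβ i i - lα i i)
    (hC2 : ∀ i, 0 < Pβ i - Pα i)
    (hEq13 : ∀ i : Fin n,
      (Real.sqrt ((lβ i i - lα i i) *
          ∑ g ∈ Finset.univ.erase i, |lα i g - lβ i g|)
        - ∑ g ∈ (Finset.univ.erase i).filter (fun g => lα i g - lβ i g < 0),
            (lα i g - lβ i g))
      / (2 * (Pβ i - Pα i)
        + ∑ g ∈ (Finset.univ.erase i).filter (fun g => 0 ≤ lα i g - lβ i g),
            (lα i g - lβ i g) / amax)
      < amin) :
    ∃ L : ℝ, 0 ≤ L ∧ L < 1 ∧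
      ∀ a a' : Fin n → ℝ,
        (∀ g, amin ≤ a g ∧ a g ≤ amax) → (∀ g, amin ≤ a' g ∧ a' g ≤ amax) →
        Finset.univ.sup' (Finset.univ_nonempty_iff.mpr ⟨⟨0, hn⟩⟩)
            (fun i => |Fmfpi n Pβ Pα lβ lα a i - Fmfpi n Pβ Pα lβ lα a' i|)
          ≤ L * Finset.univ.sup' (Finset.univ_nonempty_iff.mpr ⟨⟨0, hn⟩⟩)
            (fun i => |a i - a' i|) := by
  have hne : (univ : Finset (Fin n)).Nonempty := univ_nonempty_iff.mpr ⟨⟨0, hn⟩⟩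
  let L (i : Fin n) : ℝ := Mfpi.lipConst (univ.erase i) (fun g => lα i g - lβ i g)
    (Pβ i - Pα i) (lβ i i - lα i i) amin amax
  have hsqrt (i : Fin n) := Mfpi.sqrt_lt_two_mul_den_minCorner hamin haminmax (hC2 i) (hEq13 i)
  refine ⟨univ.sup' hne L,
    (Mfpi.lipConst_nonneg (hC1 ⟨0, hn⟩).le _ _).trans (le_sup' L (mem_univ _)),
    (sup'_lt_iff hne).2 fun i _ => Mfpi.lipConst_lt_one (hsqrt i), fun a a' ha ha' => ?_⟩
  set Δ := univ.sup' hne fun g => |a g - a' g|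
  have hΔ0 : 0 ≤ Δ :=
    (abs_nonneg _).trans (le_sup' (fun g => |a g - a' g|) (mem_univ ⟨0, hn⟩))
  refine sup'_le _ _ fun i _ => ?_
  have hmin : 0 < Mfpi.den (univ.erase i) (fun g => lα i g - lβ i g) (Pβ i - Pα i)
      (Mfpi.minCorner _ amin amax) :=
    pos_of_mul_pos_right ((Real.sqrt_nonneg _).trans_lt (hsqrt i)) (by positivity)
  calc |Fmfpi n Pβ Pα lβ lα a i - Fmfpi n Pβ Pα lβ lα a' i|
      ≤ L i * Δ := Mfpi.abs_div_den_sub_div_den_le (hC1 i).le hamin hmin (fun g _ => ha g)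
        (fun g _ => ha' g) fun g _ => le_sup' (fun g => |a g - a' g|) (mem_univ g)
    _ ≤ univ.sup' hne L * Δ := by gcongr; exact le_sup' L (mem_univ i)
end

section
/- (Theorem 1, convergence of the MFPI attack.) Assume conditions (C1) and (C2), the a_min bound (Eq. 13) with 0 < a_min ≤ a_max, and the self-map condition (C3): a_min ≤ F_i(a) ≤ a_max for every a ∈ B and every i. Then F has a unique fixed point a* in B, and for every initial vector a⁰ ∈ B the fixed-point iterates a^{k+1} = F(a^k) converge to a* as k → ∞. -/
set_option maxHeartbeats 1000000


/-- Abstract form of the consequence of Eq. (13). -/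
lemma mfpi_key_ineq (c P amin amax Qp Qm : ℝ)
    (hc : 0 < c) (hP : 0 < P) (hamin : 0 < amin) (hmm : amin ≤ amax)
    (hQp : 0 ≤ Qp) (hQm : Qm ≤ 0)
    (h13 : (Real.sqrt (c * (Qp - Qm)) - Qm) / (2 * P + Qp / amax) < amin) :
    0 < P + Qp / (2 * amax) + Qm / (2 * amin) ∧
    c * (Qp - Qm) < 4 * amin ^ 2 * (P + Qp / (2 * amax) + Qm / (2 * amin)) ^ 2 := by
  have hamax : 0 < amax := lt_of_lt_of_le hamin hmm
  have hden : 0 < 2 * P + Qp / amax := by positivity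
  rw [div_lt_iff₀ hden] at h13
  have hsr : 0 ≤ Real.sqrt (c * (Qp - Qm)) := Real.sqrt_nonneg _
  have hrw : amin * (2 * P + Qp / amax) + Qm
      = 2 * amin * (P + Qp / (2 * amax) + Qm / (2 * amin)) := by
    field_simp
  have hmain : Real.sqrt (c * (Qp - Qm))
      < 2 * amin * (P + Qp / (2 * amax) + Qm / (2 * amin)) := by
    rw [← hrw]; linarith
  have hDpos : 0 < P + Qp / (2 * amax) + Qm / (2 * amin) := by nlinarith
  refine ⟨hDpos, ?_⟩
  have hcs : 0 ≤ c * (Qp - Qm) := by nlinarith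
  have hsq := Real.sq_sqrt hcs
  nlinarith [hsr, hmain, hDpos]

/-- Theorem 1 (convergence of the MFPI attack): under conditions (C1), (C2), the
    `a_min` bound (Eq. 13), and the self-map condition (C3), the MFPI map has a unique
    fixed point in the box `B`, and the fixed-point iterates converge to it from any
    initial vector in `B`. -/
theorem mfpi_converges_to_unique_fixed_point
    (n : ℕ) (hn : 1 ≤ n)
    (Pβ Pα : Fin n → ℝ) (lβ lα : Fin n → Fin n → ℝ)
    (amin amax : ℝ) (hamin : 0 < amin) (haminmax : amin ≤ amax)
    (hC1 : ∀ i, 0 < lβ i i - lα i i)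
    (hC2 : ∀ i, 0 < Pβ i - Pα i)
    (hEq13 : ∀ i : Fin n,
      (Real.sqrt ((lβ i i - lα i i) *
          ∑ g ∈ Finset.univ.erase i, |lα i g - lβ i g|)
        - ∑ g ∈ (Finset.univ.erase i).filter (fun g => lα i g - lβ i g < 0),
            (lα i g - lβ i g))
      / (2 * (Pβ i - Pα i)
        + ∑ g ∈ (Finset.univ.erase i).filter (fun g => 0 ≤ lα i g - lβ i g),
            (lα i g - lβ i g) / amax)
      < amin)
    (hC3 : ∀ a : Fin n → ℝ, (∀ g, amin ≤ a g ∧ a g ≤ amax) →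
      ∀ i, amin ≤ Fmfpi n Pβ Pα lβ lα a i ∧ Fmfpi n Pβ Pα lβ lα a i ≤ amax) :
    ∃ astar : Fin n → ℝ,
      (∀ g, amin ≤ astar g ∧ astar g ≤ amax) ∧
      (fun i => Fmfpi n Pβ Pα lβ lα astar i) = astar ∧
      (∀ a' : Fin n → ℝ, (∀ g, amin ≤ a' g ∧ a' g ≤ amax) →
        (fun i => Fmfpi n Pβ Pα lβ lα a' i) = a' → a' = astar) ∧
      (∀ a0 : Fin n → ℝ, (∀ g, amin ≤ a0 g ∧ a0 g ≤ amax) →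
        Filter.Tendsto
          (fun k => (fun a i => Fmfpi n Pβ Pα lβ lα a i)^[k] a0)
          Filter.atTop (nhds astar)) := by
  classical
  have hamax : 0 < amax := lt_of_lt_of_le hamin haminmax
  have hfin : Nonempty (Fin n) := ⟨⟨0, hn⟩⟩
  set F : (Fin n → ℝ) → (Fin n → ℝ) := fun a i => Fmfpi n Pβ Pα lβ lα a i with hFdef
  -- per-index quantities
  set Qp : Fin n → ℝ := fun i =>
    ∑ g ∈ (Finset.univ.erase i).filter (fun g => 0 ≤ lα i g - lβ i g),
      (lα i g - lβ i g) with hQpdef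
  set Qm : Fin n → ℝ := fun i =>
    ∑ g ∈ (Finset.univ.erase i).filter (fun g => lα i g - lβ i g < 0),
      (lα i g - lβ i g) with hQmdef
  have hQp : ∀ i, 0 ≤ Qp i := fun i =>
    Finset.sum_nonneg fun g hg => (Finset.mem_filter.mp hg).2
  have hQm : ∀ i, Qm i ≤ 0 := fun i =>
    Finset.sum_nonpos fun g hg => le_of_lt (Finset.mem_filter.mp hg).2
  -- the sum of absolute values equals Qp - Qm
  have hfilt : ∀ i, (Finset.univ.erase i).filter (fun g => ¬ 0 ≤ lα i g - lβ i g)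
      = (Finset.univ.erase i).filter (fun g => lα i g - lβ i g < 0) := by
    intro i; apply Finset.filter_congr; intro g _; simp [not_le]
  have hS : ∀ i, ∑ g ∈ Finset.univ.erase i, |lα i g - lβ i g| = Qp i - Qm i := by
    intro i
    rw [← Finset.sum_filter_add_sum_filter_not (Finset.univ.erase i)
      (fun g => 0 ≤ lα i g - lβ i g), hfilt i]
    rw [hQpdef, hQmdef]
    simp only
    rw [sub_eq_add_neg, ← Finset.sum_neg_distrib]
    congr 1
    · exact Finset.sum_congr rfl fun g hg => abs_of_nonneg (Finset.mem_filter.mp hg).2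
    · exact Finset.sum_congr rfl fun g hg =>
        abs_of_neg (Finset.mem_filter.mp hg).2
  -- lower bound for the denominator on the box
  set Dlow : Fin n → ℝ := fun i =>
    (Pβ i - Pα i) + Qp i / (2 * amax) + Qm i / (2 * amin) with hDlowdef
  have hkey : ∀ i, 0 < Dlow i ∧
      (lβ i i - lα i i) * (Qp i - Qm i) < 4 * amin ^ 2 * (Dlow i) ^ 2 := by
    intro i
    have h13 := hEq13 i
    rw [hS i] at h13
    have h13' : (Real.sqrt ((lβ i i - lα i i) * (Qp i - Qm i)) - Qm i)
        / (2 * (Pβ i - Pα i) + Qp i / amax) < amin := by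
      have : ∑ g ∈ (Finset.univ.erase i).filter (fun g => 0 ≤ lα i g - lβ i g),
          (lα i g - lβ i g) / amax = Qp i / amax := by
        rw [hQpdef]; simp only [Finset.sum_div]
      rw [← this]; exact h13
    exact mfpi_key_ineq _ _ _ _ _ _ (hC1 i) (hC2 i) hamin haminmax (hQp i) (hQm i) h13'
  have hDlowpos : ∀ i, 0 < Dlow i := fun i => (hkey i).1
  -- Dden is bounded below by Dlow on the box
  have hDden_ge : ∀ (a : Fin n → ℝ), (∀ g, amin ≤ a g ∧ a g ≤ amax) →
      ∀ i, Dlow i ≤ Dden n Pβ Pα lβ lα a i := by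
    intro a ha i
    have hapos : ∀ g, 0 < a g := fun g => lt_of_lt_of_le hamin (ha g).1
    rw [Dden, ← Finset.sum_filter_add_sum_filter_not (Finset.univ.erase i)
      (fun g => 0 ≤ lα i g - lβ i g) (fun g => (lα i g - lβ i g) / (2 * a g)), hfilt i]
    have h1 : Qp i / (2 * amax) ≤
        ∑ g ∈ (Finset.univ.erase i).filter (fun g => 0 ≤ lα i g - lβ i g),
          (lα i g - lβ i g) / (2 * a g) := by
      rw [hQpdef]; simp only [Finset.sum_div]
      apply Finset.sum_le_sum
      intro g hg
      have hge : 0 ≤ lα i g - lβ i g := (Finset.mem_filter.mp hg).2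
      have hag := hapos g
      rw [div_le_div_iff₀ (by positivity) (by positivity)]
      nlinarith [(ha g).2, hamax]
    have h2 : Qm i / (2 * amin) ≤
        ∑ g ∈ (Finset.univ.erase i).filter (fun g => lα i g - lβ i g < 0),
          (lα i g - lβ i g) / (2 * a g) := by
      rw [hQmdef]; simp only [Finset.sum_div]
      apply Finset.sum_le_sum
      intro g hg
      have hlt : lα i g - lβ i g < 0 := (Finset.mem_filter.mp hg).2
      have hag := hapos g
      rw [div_le_div_iff₀ (by positivity) (by positivity)]
      have := (ha g).1
      nlinarith
    rw [hDlowdef]; simp only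
    linarith
  -- contraction constant
  set Kf : Fin n → ℝ := fun i =>
    (lβ i i - lα i i) * (Qp i - Qm i) / (4 * amin ^ 2 * (Dlow i) ^ 2) with hKfdef
  have hKf0 : ∀ i, 0 ≤ Kf i := by
    intro i
    have hnum : 0 ≤ (lβ i i - lα i i) * (Qp i - Qm i) := by
      nlinarith [hC1 i, hQp i, hQm i]
    exact div_nonneg hnum (by positivity)
  have hKf1 : ∀ i, Kf i < 1 := by
    intro i
    have hK : Kf i = (lβ i i - lα i i) * (Qp i - Qm i) / (4 * amin ^ 2 * Dlow i ^ 2) := rfl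
    rw [hK, div_lt_one (mul_pos (mul_pos four_pos (pow_pos hamin 2)) (pow_pos (hDlowpos i) 2))]
    exact (hkey i).2
  set K : ℝ := Finset.univ.sup' (Finset.univ_nonempty) Kf with hKdef
  have hK0 : 0 ≤ K := le_trans (hKf0 (Classical.arbitrary (Fin n)))
    (Finset.le_sup' Kf (Finset.mem_univ _))
  have hK1 : K < 1 := (Finset.sup'_lt_iff _).mpr fun i _ => hKf1 i
  have hKge : ∀ i, Kf i ≤ K := fun i => Finset.le_sup' Kf (Finset.mem_univ i)
  -- coordinatewise Lipschitz bound
  have hlip : ∀ a b : Fin n → ℝ, (∀ g, amin ≤ a g ∧ a g ≤ amax) →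
      (∀ g, amin ≤ b g ∧ b g ≤ amax) →
      ∀ i, |F a i - F b i| ≤ K * dist a b := by
    intro a b ha hb i
    have hapos : ∀ g, 0 < a g := fun g => lt_of_lt_of_le hamin (ha g).1
    have hbpos : ∀ g, 0 < b g := fun g => lt_of_lt_of_le hamin (hb g).1
    set Da := Dden n Pβ Pα lβ lα a i with hDa
    set Db := Dden n Pβ Pα lβ lα b i with hDb
    have hDa0 : 0 < Da := lt_of_lt_of_le (hDlowpos i) (hDden_ge a ha i)
    have hDb0 : 0 < Db := lt_of_lt_of_le (hDlowpos i) (hDden_ge b hb i)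
    set c := lβ i i - lα i i with hcdef
    have hc : 0 < c := hC1 i
    -- difference of denominators
    have hdiff : Db - Da = ∑ g ∈ Finset.univ.erase i,
        (lα i g - lβ i g) * (a g - b g) / (2 * a g * b g) := by
      rw [hDa, hDb, Dden, Dden]
      rw [add_sub_add_left_eq_sub, ← Finset.sum_sub_distrib]
      apply Finset.sum_congr rfl
      intro g _
      field_simp [(hapos g).ne', (hbpos g).ne']
    have hdiffbound : |Db - Da| ≤
        (Qp i - Qm i) * (dist a b / (2 * amin ^ 2)) := by
      rw [hdiff, ← hS i]
      calc |∑ g ∈ Finset.univ.erase i, (lα i g - lβ i g) * (a g - b g) / (2 * a g * b g)|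
          ≤ ∑ g ∈ Finset.univ.erase i,
            |(lα i g - lβ i g) * (a g - b g) / (2 * a g * b g)| :=
            Finset.abs_sum_le_sum_abs _ _
        _ ≤ ∑ g ∈ Finset.univ.erase i, |lα i g - lβ i g| * (dist a b / (2 * amin ^ 2)) := by
            apply Finset.sum_le_sum
            intro g _
            have hag := hapos g
            have hbg := hbpos g
            rw [abs_div, abs_mul, abs_of_pos (show (0:ℝ) < 2 * a g * b g by positivity)]
            rw [div_le_iff₀ (by positivity)]
            have h1 : |a g - b g| ≤ dist a b := by
              have := dist_le_pi_dist a b g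
              rwa [Real.dist_eq] at this
            have h2 : 2 * amin ^ 2 ≤ 2 * a g * b g := by nlinarith [(ha g).1, (hb g).1]
            have h3 : |lα i g - lβ i g| * |a g - b g| ≤ |lα i g - lβ i g| * dist a b :=
              mul_le_mul_of_nonneg_left h1 (abs_nonneg _)
            calc |lα i g - lβ i g| * |a g - b g|
                ≤ |lα i g - lβ i g| * dist a b := h3
              _ = |lα i g - lβ i g| * dist a b / (2 * amin ^ 2) * (2 * amin ^ 2) := by
                  field_simp
              _ ≤ |lα i g - lβ i g| * (dist a b / (2 * amin ^ 2)) * (2 * a g * b g) := by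
                  rw [mul_div_assoc]
                  exact mul_le_mul_of_nonneg_left h2 (by positivity)
        _ = (∑ g ∈ Finset.univ.erase i, |lα i g - lβ i g|) * (dist a b / (2 * amin ^ 2)) :=
            (Finset.sum_mul _ _ _).symm
    -- difference of F values
    have heq : F a i - F b i = c * (Db - Da) / (2 * (Da * Db)) := by
      show Fmfpi n Pβ Pα lβ lα a i - Fmfpi n Pβ Pα lβ lα b i = _
      rw [Fmfpi, Fmfpi, ← hDa, ← hDb, ← hcdef]
      field_simp [hDa0.ne', hDb0.ne']
    have habs : |F a i - F b i| = c * |Db - Da| / (2 * (Da * Db)) := by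
      rw [heq, abs_div, abs_mul, abs_of_pos hc,
        abs_of_pos (show (0:ℝ) < 2 * (Da * Db) by positivity)]
    have hnum : c * |Db - Da| ≤ c * ((Qp i - Qm i) * (dist a b / (2 * amin ^ 2))) :=
      mul_le_mul_of_nonneg_left hdiffbound hc.le
    have hden2 : 2 * (Dlow i * Dlow i) ≤ 2 * (Da * Db) := by
      have h1 := hDden_ge a ha i
      have h2 := hDden_ge b hb i
      have := hDlowpos i
      nlinarith
    have hstep : |F a i - F b i| ≤
        c * ((Qp i - Qm i) * (dist a b / (2 * amin ^ 2))) / (2 * (Dlow i * Dlow i)) := by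
      rw [habs]
      have hr : 0 ≤ c * ((Qp i - Qm i) * (dist a b / (2 * amin ^ 2))) := by
        have h1 : 0 ≤ Qp i - Qm i := by linarith [hQp i, hQm i]
        positivity
      have hd : 0 < 2 * (Dlow i * Dlow i) := mul_pos two_pos (mul_pos (hDlowpos i) (hDlowpos i))
      exact div_le_div₀ hr hnum hd hden2
    have hfinal : c * ((Qp i - Qm i) * (dist a b / (2 * amin ^ 2))) / (2 * (Dlow i * Dlow i))
        = Kf i * dist a b := by
      have hK : Kf i = c * (Qp i - Qm i) / (4 * amin ^ 2 * Dlow i ^ 2) := rfl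
      rw [hK]
      have h1 : amin ≠ 0 := hamin.ne'
      have h2 : Dlow i ≠ 0 := (hDlowpos i).ne'
      field_simp
      ring
    calc |F a i - F b i| ≤ Kf i * dist a b := by rw [← hfinal]; exact hstep
      _ ≤ K * dist a b := mul_le_mul_of_nonneg_right (hKge i) dist_nonneg
  -- set up the complete metric space structure on the box
  set B : Set (Fin n → ℝ) := Set.Icc (fun _ => amin) (fun _ => amax) with hBdef
  have hmemB : ∀ a : Fin n → ℝ, a ∈ B ↔ ∀ g, amin ≤ a g ∧ a g ≤ amax := by
    intro a
    constructor
    · rintro ⟨h1, h2⟩ g; exact ⟨h1 g, h2 g⟩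
    · intro h; exact ⟨fun g => (h g).1, fun g => (h g).2⟩
  haveI : CompleteSpace B := (isClosed_Icc).completeSpace_coe
  haveI : Nonempty B := ⟨⟨fun _ => amin, (hmemB _).2 fun g => ⟨le_refl _, haminmax⟩⟩⟩
  set fhat : B → B := fun x => ⟨F x.1, (hmemB _).2 (hC3 x.1 ((hmemB _).1 x.2))⟩ with hfhatdef
  have hK0' : (0:ℝ) ≤ K := hK0
  set K' : NNReal := ⟨K, hK0'⟩ with hK'def
  have hcontr : ContractingWith K' fhat := by
    constructor
    · exact_mod_cast hK1
    · apply LipschitzWith.of_dist_le_mul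
      intro x y
      rw [Subtype.dist_eq, Subtype.dist_eq]
      show dist (F x.1) (F y.1) ≤ (K' : ℝ) * dist x.1 y.1
      have : (K' : ℝ) = K := rfl
      rw [this]
      rw [dist_pi_le_iff (by positivity)]
      intro i
      rw [Real.dist_eq]
      exact hlip x.1 y.1 ((hmemB _).1 x.2) ((hmemB _).1 y.2) i
  set xstar : B := ContractingWith.fixedPoint fhat hcontr with hxstar
  have hfix : fhat xstar = xstar := ContractingWith.fixedPoint_isFixedPt hcontr
  -- iterates agree
  have hiter : ∀ (k : ℕ) (x : B), ((fhat^[k] x : B) : Fin n → ℝ) = F^[k] (x : Fin n → ℝ) := by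
    intro k
    induction k with
    | zero => intro x; simp
    | succ k ih =>
        intro x
        rw [Function.iterate_succ_apply, Function.iterate_succ_apply, ih]
  refine ⟨(xstar : Fin n → ℝ), (hmemB _).1 xstar.2, ?_, ?_, ?_⟩
  · exact congrArg Subtype.val hfix
  · intro a' ha' hfix'
    have hmem' : a' ∈ B := (hmemB _).2 ha'
    have : fhat ⟨a', hmem'⟩ = ⟨a', hmem'⟩ := Subtype.ext hfix'
    have := ContractingWith.fixedPoint_unique hcontr this
    exact congrArg Subtype.val this
  · intro a0 ha0
    have hmem0 : a0 ∈ B := (hmemB _).2 ha0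
    have htd := ContractingWith.tendsto_iterate_fixedPoint hcontr (⟨a0, hmem0⟩ : B)
    have htd' : Filter.Tendsto (fun k => ((fhat^[k] ⟨a0, hmem0⟩ : B) : Fin n → ℝ))
        Filter.atTop (nhds (xstar : Fin n → ℝ)) :=
      ((continuous_subtype_val.tendsto xstar).comp htd)
    convert htd' using 2 with k
    exact (hiter k ⟨a0, hmem0⟩).symm
end

section
/- (Recovery of the true quadratic coefficients.) Assume conditions (C1) and (C2), the a_min bound (Eq. 13) with 0 < a_min ≤ a_max, and the self-map condition (C3): a_min ≤ F_i(a) ≤ a_max for every a ∈ B and every i. Suppose the true coefficient vector a ∈ B (with all a_g > 0) together with some vector b ∈ ℝ^n satisfies, for every i, the two stationarity equations 2·a_i·(Pβ_i − Σ_{g≠i} (λβ_{i,g} − b_g)/(2 a_g)) + b_i − λβ_{i,i} = 0 and 2·a_i·(Pα_i − Σ_{g≠i} (λα_{i,g} − b_g)/(2 a_g)) + b_i − λα_{i,i} = 0. Then a is the unique fixed point of F in B, and for every initial vector a⁰ ∈ B the MFPI iterates a^{k+1} = F(a^k) converge to the true coefficient vector a. -/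
open Function Set Filter Topology
open scoped NNReal

theorem LipschitzOnWith.pi {α ι : Type*} [PseudoEMetricSpace α] [Fintype ι] {β : ι → Type*}
    [∀ i, PseudoEMetricSpace (β i)] {f : α → ∀ i, β i} {s : Set α} {K : ℝ≥0}
    (hf : ∀ i, LipschitzOnWith K (fun x => f x i) s) : LipschitzOnWith K f s :=
  fun _ hx _ hy => edist_pi_le_iff.2 fun i => hf i hx hy

section FixedPoint

variable {α : Type*} {f : α → α} {s : Set α} {K : ℝ≥0}

theorem LipschitzOnWith.eq_of_isFixedPt [MetricSpace α] (hf : LipschitzOnWith K f s)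
    (hK : K < 1) {x y : α} (hx : x ∈ s) (hy : y ∈ s) (hfx : IsFixedPt f x)
    (hfy : IsFixedPt f y) : x = y := by
  have h : dist x y ≤ K * dist x y := by
    simpa only [hfx.eq, hfy.eq] using hf.dist_le_mul x hx y hy
  have hK' : (K : ℝ) < 1 := hK
  exact dist_le_zero.1 (by nlinarith [dist_nonneg (x := x) (y := y)])

theorem LipschitzOnWith.tendsto_iterate_of_isFixedPt [PseudoMetricSpace α]
    (hf : LipschitzOnWith K f s) (hK : K < 1) (hfs : MapsTo f s s) {p : α} (hp : p ∈ s)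
    (hfp : IsFixedPt f p) {x : α} (hx : x ∈ s) :
    Tendsto (fun k => f^[k] x) atTop (𝓝 p) := by
  have hdist : ∀ k : ℕ, dist (f^[k] x) p ≤ K ^ k * dist x p := by
    intro k
    induction k with
    | zero => simp
    | succ k ih =>
      calc dist (f^[k + 1] x) p = dist (f (f^[k] x)) (f p) := by
            rw [iterate_succ_apply', hfp.eq]
        _ ≤ K * dist (f^[k] x) p := hf.dist_le_mul _ (hfs.iterate k hx) p hp
        _ ≤ K * (K ^ k * dist x p) := by gcongr
        _ = K ^ (k + 1) * dist x p := by ring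
  rw [tendsto_iff_dist_tendsto_zero]
  refine squeeze_zero (fun _ => dist_nonneg) hdist ?_
  simpa using (tendsto_pow_atTop_nhds_zero_of_lt_one K.2 hK).mul_const (dist x p)

end FixedPoint

theorem abs_inv_sub_inv_le {m x y : ℝ} (hm : 0 < m) (hx : m ≤ x) (hy : m ≤ y) :
    |x⁻¹ - y⁻¹| ≤ |x - y| / m ^ 2 := by
  have hx0 : 0 < x := hm.trans_le hx
  have hy0 : 0 < y := hm.trans_le hy
  rw [inv_sub_inv hx0.ne' hy0.ne', abs_div, abs_of_pos (mul_pos hx0 hy0), abs_sub_comm]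
  gcongr
  rw [sq]
  exact mul_le_mul hx hy hm.le hx0.le

/-- The minimum of `Dden n Pβ Pα lβ lα · i` over the box `[amin, amax]ⁿ`, attained by taking
`a_g = amax` or `a_g = amin` according to the sign of `lα i g - lβ i g`. -/
noncomputable def Dmin (n : ℕ) (Pβ Pα : Fin n → ℝ) (lβ lα : Fin n → Fin n → ℝ)
    (amin amax : ℝ) (i : Fin n) : ℝ :=
  Pβ i - Pα i
    + (∑ g ∈ (Finset.univ.erase i).filter (fun g => 0 ≤ lα i g - lβ i g), (lα i g - lβ i g))
      / (2 * amax)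
    + (∑ g ∈ (Finset.univ.erase i).filter (fun g => lα i g - lβ i g < 0), (lα i g - lβ i g))
      / (2 * amin)

section MFPI

variable {n : ℕ} {Pβ Pα : Fin n → ℝ} {lβ lα : Fin n → Fin n → ℝ} {amin amax : ℝ}

theorem Dmin_le_Dden (hamin : 0 < amin) {x : Fin n → ℝ}
    (hx : ∀ g, amin ≤ x g ∧ x g ≤ amax) (i : Fin n) :
    Dmin n Pβ Pα lβ lα amin amax i ≤ Dden n Pβ Pα lβ lα x i := by
  have hx0 : ∀ g, 0 < 2 * x g := fun g => by linarith [(hx g).1]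
  rw [Dmin, Dden, add_assoc, Finset.sum_div, Finset.sum_div,
    ← Finset.sum_filter_add_sum_filter_not _ (fun g => 0 ≤ lα i g - lβ i g)
      (fun g => (lα i g - lβ i g) / (2 * x g))]
  simp only [not_le]
  refine add_le_add le_rfl
    (add_le_add (Finset.sum_le_sum fun g hg => ?_) (Finset.sum_le_sum fun g hg => ?_))
  · exact div_le_div_of_nonneg_left (Finset.mem_filter.1 hg).2 (hx0 g) (by linarith [(hx g).2])
  · have hneg := (Finset.mem_filter.1 hg).2
    rw [div_le_div_iff₀ (by linarith) (hx0 g)]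
    nlinarith [(hx g).1]

theorem abs_Dden_sub_Dden_le (hamin : 0 < amin) {x y : Fin n → ℝ} (hx : ∀ g, amin ≤ x g)
    (hy : ∀ g, amin ≤ y g) (i : Fin n) :
    |Dden n Pβ Pα lβ lα x i - Dden n Pβ Pα lβ lα y i|
      ≤ (∑ g ∈ Finset.univ.erase i, |lα i g - lβ i g|) / (2 * amin ^ 2) * dist x y := by
  have hdiff : Dden n Pβ Pα lβ lα x i - Dden n Pβ Pα lβ lα y i
      = ∑ g ∈ Finset.univ.erase i, (lα i g - lβ i g) / 2 * ((x g)⁻¹ - (y g)⁻¹) := by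
    rw [Dden, Dden, add_sub_add_left_eq_sub, ← Finset.sum_sub_distrib]
    exact Finset.sum_congr rfl fun g _ => by ring
  rw [hdiff, Finset.sum_div, Finset.sum_mul]
  refine (Finset.abs_sum_le_sum_abs _ _).trans (Finset.sum_le_sum fun g _ => ?_)
  have hxy : |x g - y g| ≤ dist x y := by
    simpa only [Real.dist_eq] using dist_le_pi_dist x y g
  calc |(lα i g - lβ i g) / 2 * ((x g)⁻¹ - (y g)⁻¹)|
      = |lα i g - lβ i g| / 2 * |(x g)⁻¹ - (y g)⁻¹| := by rw [abs_mul, abs_div, abs_two]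
    _ ≤ |lα i g - lβ i g| / 2 * (dist x y / amin ^ 2) := by
      gcongr
      exact (abs_inv_sub_inv_le hamin (hx g) (hy g)).trans (by gcongr)
    _ = |lα i g - lβ i g| / (2 * amin ^ 2) * dist x y := by ring

theorem sqrt_lt_two_mul_Dmin (hamin : 0 < amin) (hamax : 0 < amax) {i : Fin n}
    (hP : 0 < Pβ i - Pα i)
    (h13 : (√((lβ i i - lα i i) * ∑ g ∈ Finset.univ.erase i, |lα i g - lβ i g|)
        - ∑ g ∈ (Finset.univ.erase i).filter (fun g => lα i g - lβ i g < 0),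
            (lα i g - lβ i g))
      / (2 * (Pβ i - Pα i)
        + ∑ g ∈ (Finset.univ.erase i).filter (fun g => 0 ≤ lα i g - lβ i g),
            (lα i g - lβ i g) / amax)
      < amin) :
    √((lβ i i - lα i i) * ∑ g ∈ Finset.univ.erase i, |lα i g - lβ i g|)
      < 2 * amin * Dmin n Pβ Pα lβ lα amin amax i := by
  set N := ∑ g ∈ (Finset.univ.erase i).filter (fun g => lα i g - lβ i g < 0), (lα i g - lβ i g)
    with hNdef
  set P := ∑ g ∈ (Finset.univ.erase i).filter (fun g => 0 ≤ lα i g - lβ i g), (lα i g - lβ i g)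
    with hPdef
  have hPnonneg : 0 ≤ P := Finset.sum_nonneg fun g hg => (Finset.mem_filter.1 hg).2
  rw [← Finset.sum_div, div_lt_iff₀ (by positivity)] at h13
  have hDmin : 2 * amin * Dmin n Pβ Pα lβ lα amin amax i
      = amin * (2 * (Pβ i - Pα i) + P / amax) + N := by
    rw [Dmin, ← hNdef, ← hPdef]
    field_simp
  linarith

theorem abs_Fmfpi_sub_Fmfpi_le (hamin : 0 < amin) {i : Fin n} (hc : 0 ≤ lβ i i - lα i i)
    (hDmin : 0 < Dmin n Pβ Pα lβ lα amin amax i) {x y : Fin n → ℝ}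
    (hx : ∀ g, amin ≤ x g ∧ x g ≤ amax) (hy : ∀ g, amin ≤ y g ∧ y g ≤ amax) :
    |Fmfpi n Pβ Pα lβ lα x i - Fmfpi n Pβ Pα lβ lα y i|
      ≤ (lβ i i - lα i i) * (∑ g ∈ Finset.univ.erase i, |lα i g - lβ i g|)
        / (2 * amin * Dmin n Pβ Pα lβ lα amin amax i) ^ 2 * dist x y := by
  have hF : ∀ z, Fmfpi n Pβ Pα lβ lα z i
      = (lβ i i - lα i i) / 2 * (Dden n Pβ Pα lβ lα z i)⁻¹ := fun z => by
    rw [Fmfpi, div_mul_eq_div_div, div_eq_mul_inv]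
  rw [hF, hF, ← mul_sub, abs_mul, abs_of_nonneg (by linarith)]
  calc _ ≤ (lβ i i - lα i i) / 2 * (|Dden n Pβ Pα lβ lα x i - Dden n Pβ Pα lβ lα y i|
          / Dmin n Pβ Pα lβ lα amin amax i ^ 2) := by
        gcongr
        exact abs_inv_sub_inv_le hDmin (Dmin_le_Dden hamin hx i) (Dmin_le_Dden hamin hy i)
    _ ≤ (lβ i i - lα i i) / 2 * ((∑ g ∈ Finset.univ.erase i, |lα i g - lβ i g|)
          / (2 * amin ^ 2) * dist x y / Dmin n Pβ Pα lβ lα amin amax i ^ 2) := by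
        gcongr
        exact abs_Dden_sub_Dden_le hamin (fun g => (hx g).1) (fun g => (hy g).1) i
    _ = _ := by field_simp

theorem exists_lipschitzOnWith_Fmfpi_lt_one (hamin : 0 < amin)
    (hC1 : ∀ i, 0 < lβ i i - lα i i)
    (hsqrt : ∀ i, √((lβ i i - lα i i) * ∑ g ∈ Finset.univ.erase i, |lα i g - lβ i g|)
      < 2 * amin * Dmin n Pβ Pα lβ lα amin amax i) :
    ∃ K < 1, LipschitzOnWith K (fun x i => Fmfpi n Pβ Pα lβ lα x i)
      {x | ∀ g, amin ≤ x g ∧ x g ≤ amax} := by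
  have hDmin i : 0 < Dmin n Pβ Pα lβ lα amin amax i :=
    pos_of_mul_pos_right ((Real.sqrt_nonneg _).trans_lt (hsqrt i)) (by positivity)
  set k : Fin n → ℝ := fun i => (lβ i i - lα i i) * (∑ g ∈ Finset.univ.erase i, |lα i g - lβ i g|)
    / (2 * amin * Dmin n Pβ Pα lβ lα amin amax i) ^ 2
  refine ⟨Finset.univ.sup fun i => (k i).toNNReal, ?_, LipschitzOnWith.pi fun i => ?_⟩
  · refine (Finset.sup_lt_iff zero_lt_one).2 fun i _ => Real.toNNReal_lt_one.2 ?_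
    have hpos : 0 < 2 * amin * Dmin n Pβ Pα lβ lα amin amax i := mul_pos (by positivity) (hDmin i)
    exact (div_lt_one (by positivity)).2 ((Real.sqrt_lt' hpos).1 (hsqrt i))
  · refine (LipschitzOnWith.of_dist_le' fun x hx y hy => ?_).weaken
      (Finset.le_sup (f := fun i => (k i).toNNReal) (Finset.mem_univ i))
    exact abs_Fmfpi_sub_Fmfpi_le hamin (hC1 i).le (hDmin i) hx hy

theorem Fmfpi_eq_of_stationary {a b : Fin n → ℝ} {i : Fin n} (hc : lβ i i - lα i i ≠ 0)
    (hβ : 2 * a i * (Pβ i - ∑ g ∈ Finset.univ.erase i, (lβ i g - b g) / (2 * a g))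
            + b i - lβ i i = 0)
    (hα : 2 * a i * (Pα i - ∑ g ∈ Finset.univ.erase i, (lα i g - b g) / (2 * a g))
            + b i - lα i i = 0) :
    Fmfpi n Pβ Pα lβ lα a i = a i := by
  have hsum : ∑ g ∈ Finset.univ.erase i, (lα i g - lβ i g) / (2 * a g)
      = ∑ g ∈ Finset.univ.erase i, (lα i g - b g) / (2 * a g)
        - ∑ g ∈ Finset.univ.erase i, (lβ i g - b g) / (2 * a g) := by
    rw [← Finset.sum_sub_distrib]
    exact Finset.sum_congr rfl fun g _ => by ring
  have hD : 2 * a i * Dden n Pβ Pα lβ lα a i = lβ i i - lα i i := by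
    rw [Dden, hsum]
    linear_combination hβ - hα
  have hD0 : Dden n Pβ Pα lβ lα a i ≠ 0 := by
    rintro h
    rw [h, mul_zero] at hD
    exact hc hD.symm
  rw [Fmfpi, ← hD]
  field_simp

end MFPI

theorem mfpi_recovers_true_coefficients_general
    (n : ℕ)
    (Pβ Pα : Fin n → ℝ) (lβ lα : Fin n → Fin n → ℝ)
    (amin amax : ℝ) (hamin : 0 < amin) (haminmax : amin ≤ amax)
    (hC1 : ∀ i, 0 < lβ i i - lα i i)
    (hC2 : ∀ i, 0 < Pβ i - Pα i)
    (hEq13 : ∀ i : Fin n,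
      (Real.sqrt ((lβ i i - lα i i) *
          ∑ g ∈ Finset.univ.erase i, |lα i g - lβ i g|)
        - ∑ g ∈ (Finset.univ.erase i).filter (fun g => lα i g - lβ i g < 0),
            (lα i g - lβ i g))
      / (2 * (Pβ i - Pα i)
        + ∑ g ∈ (Finset.univ.erase i).filter (fun g => 0 ≤ lα i g - lβ i g),
            (lα i g - lβ i g) / amax)
      < amin)
    (hC3 : ∀ a : Fin n → ℝ, (∀ g, amin ≤ a g ∧ a g ≤ amax) →
      ∀ i, amin ≤ Fmfpi n Pβ Pα lβ lα a i ∧ Fmfpi n Pβ Pα lβ lα a i ≤ amax)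
    (a b : Fin n → ℝ)
    (haB : ∀ g, amin ≤ a g ∧ a g ≤ amax)
    (hβ : ∀ i, 2 * a i * (Pβ i - ∑ g ∈ Finset.univ.erase i, (lβ i g - b g) / (2 * a g))
            + b i - lβ i i = 0)
    (hα : ∀ i, 2 * a i * (Pα i - ∑ g ∈ Finset.univ.erase i, (lα i g - b g) / (2 * a g))
            + b i - lα i i = 0) :
    (fun i => Fmfpi n Pβ Pα lβ lα a i) = a ∧
    (∀ a' : Fin n → ℝ, (∀ g, amin ≤ a' g ∧ a' g ≤ amax) →
      (fun i => Fmfpi n Pβ Pα lβ lα a' i) = a' → a' = a) ∧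
    (∀ a0 : Fin n → ℝ, (∀ g, amin ≤ a0 g ∧ a0 g ≤ amax) →
      Filter.Tendsto
        (fun k => (fun x i => Fmfpi n Pβ Pα lβ lα x i)^[k] a0)
        Filter.atTop (nhds a)) := by
  set F : (Fin n → ℝ) → Fin n → ℝ := fun x i => Fmfpi n Pβ Pα lβ lα x i
  set B : Set (Fin n → ℝ) := {x | ∀ g, amin ≤ x g ∧ x g ≤ amax}
  have hmaps : MapsTo F B B := fun x hx => hC3 x hx
  obtain ⟨K, hK, hlip⟩ := exists_lipschitzOnWith_Fmfpi_lt_one hamin hC1 fun i =>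
    sqrt_lt_two_mul_Dmin hamin (hamin.trans_le haminmax) (hC2 i) (hEq13 i)
  have hfix : IsFixedPt F a := funext fun i => Fmfpi_eq_of_stationary (hC1 i).ne' (hβ i) (hα i)
  exact ⟨hfix, fun a' ha' hfix' => hlip.eq_of_isFixedPt hK ha' haB hfix' hfix,
    fun a0 ha0 => hlip.tendsto_iterate_of_isFixedPt hK hmaps haB hfix ha0⟩

/-- Recovery of the true quadratic coefficients: under conditions (C1), (C2), the
    `a_min` bound (Eq. 13) and the self-map condition (C3), if the true coefficient
    vector `a ∈ B` satisfies the stationarity equations at the base and auxiliary data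
    points, then `a` is the unique fixed point of the MFPI map in `B`, and the MFPI
    iterates converge to `a` from any initial vector in `B`. -/
theorem mfpi_recovers_true_coefficients
    (n : ℕ) (hn : 1 ≤ n)
    (Pβ Pα : Fin n → ℝ) (lβ lα : Fin n → Fin n → ℝ)
    (amin amax : ℝ) (hamin : 0 < amin) (haminmax : amin ≤ amax)
    (hC1 : ∀ i, 0 < lβ i i - lα i i)
    (hC2 : ∀ i, 0 < Pβ i - Pα i)
    (hEq13 : ∀ i : Fin n,
      (Real.sqrt ((lβ i i - lα i i) *
          ∑ g ∈ Finset.univ.erase i, |lα i g - lβ i g|)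
        - ∑ g ∈ (Finset.univ.erase i).filter (fun g => lα i g - lβ i g < 0),
            (lα i g - lβ i g))
      / (2 * (Pβ i - Pα i)
        + ∑ g ∈ (Finset.univ.erase i).filter (fun g => 0 ≤ lα i g - lβ i g),
            (lα i g - lβ i g) / amax)
      < amin)
    (hC3 : ∀ a : Fin n → ℝ, (∀ g, amin ≤ a g ∧ a g ≤ amax) →
      ∀ i, amin ≤ Fmfpi n Pβ Pα lβ lα a i ∧ Fmfpi n Pβ Pα lβ lα a i ≤ amax)
    (a b : Fin n → ℝ)
    (hapos : ∀ g, 0 < a g)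
    (haB : ∀ g, amin ≤ a g ∧ a g ≤ amax)
    (hβ : ∀ i, 2 * a i * (Pβ i - ∑ g ∈ Finset.univ.erase i, (lβ i g - b g) / (2 * a g))
            + b i - lβ i i = 0)
    (hα : ∀ i, 2 * a i * (Pα i - ∑ g ∈ Finset.univ.erase i, (lα i g - b g) / (2 * a g))
            + b i - lα i i = 0) :
    (fun i => Fmfpi n Pβ Pα lβ lα a i) = a ∧
    (∀ a' : Fin n → ℝ, (∀ g, amin ≤ a' g ∧ a' g ≤ amax) →
      (fun i => Fmfpi n Pβ Pα lβ lα a' i) = a' → a' = a) ∧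
    (∀ a0 : Fin n → ℝ, (∀ g, amin ≤ a0 g ∧ a0 g ≤ amax) →
      Filter.Tendsto
        (fun k => (fun x i => Fmfpi n Pβ Pα lβ lα x i)^[k] a0)
        Filter.atTop (nhds a)) :=
  mfpi_recovers_true_coefficients_general n Pβ Pα lβ lα amin amax hamin haminmax hC1 hC2 hEq13 hC3 a
    b haB hβ hα
end
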